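/- arXiv:2201.04239 — 3 statements merged into one kernel-verified Lean document; each statement's English description precedes it below -/
import Mathlib

section
/- Suppose real numbers t, r and small parameter ε > 0 satisfy r = t(1 + (c₃/6)t − (c₄/24)t² − (c₃²/72)t²) + E with |t| ≤ M·ε^{1/2}, |c₃| ≤ M·ε^{1/2}, |c₄| ≤ M·ε, and |E| ≤ M·ε^{3/2} for a constant M. Then t = r(1 − (c₃/6)r + (c₄/24)r² + (5c₃²/72)r²) + E' with |E'| ≤ C(M)·ε^{3/2} for a constant C(M) depending only on M. -/
/-!
Put `s = √ε`, so that `t, c₃ = O(s)`, `c₄ = O(s²)` and `E = O(s³)`. Then every term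
`c₃ x²`, `c₄ x³`, `c₃² x³` with `x = O(s)` is `O(s³)`, whatever its coefficient. Hence
`t - r = O(s³)`, so `r = O(s)` too, and the correction terms of the inverse series, evaluated
at `r`, are again `O(s³)`.
-/

lemma abs_mul_pow_le_of_scale {c x a K s : ℝ} {i : ℕ} (n : ℕ) (hc : |c| ≤ a * s ^ i)
    (hx : |x| ≤ K * s) : |c * x ^ n| ≤ a * K ^ n * s ^ (i + n) := by
  rw [abs_mul, abs_pow]
  calc |c| * |x| ^ n ≤ a * s ^ i * (K * s) ^ n :=
        mul_le_mul hc (pow_le_pow_left₀ (abs_nonneg x) hx n) (by positivity)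
          ((abs_nonneg c).trans hc)
    _ = a * K ^ n * s ^ (i + n) := by ring

lemma abs_cubic_correction_le {M K s c₃ c₄ x : ℝ} (α β γ : ℝ) (hM : 0 ≤ M)
    (hK : 0 ≤ K) (hs₀ : 0 ≤ s) (hs₁ : s ≤ 1) (hx : |x| ≤ K * s) (hc₃ : |c₃| ≤ M * s)
    (hc₄ : |c₄| ≤ M * s ^ 2) :
    |α * c₃ * x ^ 2 + β * c₄ * x ^ 3 + γ * c₃ ^ 2 * x ^ 3| ≤
      (|α| * M * K ^ 2 + |β| * M * K ^ 3 + |γ| * M ^ 2 * K ^ 3) * s ^ 3 := by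
  have hs₅ : s ^ 5 ≤ s ^ 3 := pow_le_pow_of_le_one hs₀ hs₁ (by norm_num)
  have hc₃sq : |c₃ ^ 2| ≤ M ^ 2 * s ^ 2 := by
    rw [abs_pow, ← mul_pow]; exact pow_le_pow_left₀ (abs_nonneg c₃) hc₃ 2
  have h₃ : |c₃ * x ^ 2| ≤ M * K ^ 2 * s ^ 3 :=
    abs_mul_pow_le_of_scale 2 (by rwa [pow_one]) hx
  have h₄ : |c₄ * x ^ 3| ≤ M * K ^ 3 * s ^ 3 :=
    (abs_mul_pow_le_of_scale 3 hc₄ hx).trans (by gcongr)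
  have h₃₃ : |c₃ ^ 2 * x ^ 3| ≤ M ^ 2 * K ^ 3 * s ^ 3 :=
    (abs_mul_pow_le_of_scale 3 hc₃sq hx).trans (by gcongr)
  calc |α * c₃ * x ^ 2 + β * c₄ * x ^ 3 + γ * c₃ ^ 2 * x ^ 3|
      ≤ |α * c₃ * x ^ 2| + |β * c₄ * x ^ 3| + |γ * c₃ ^ 2 * x ^ 3| := abs_add_three _ _ _
    _ = |α| * |c₃ * x ^ 2| + |β| * |c₄ * x ^ 3| + |γ| * |c₃ ^ 2 * x ^ 3| := by
        simp only [abs_mul, mul_assoc]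
    _ ≤ |α| * (M * K ^ 2 * s ^ 3) + |β| * (M * K ^ 3 * s ^ 3) +
          |γ| * (M ^ 2 * K ^ 3 * s ^ 3) := by
        gcongr
    _ = (|α| * M * K ^ 2 + |β| * M * K ^ 3 + |γ| * M ^ 2 * K ^ 3) * s ^ 3 := by ring

noncomputable def rootShiftConst (M : ℝ) : ℝ :=
  |(-1 / 6 : ℝ)| * M * M ^ 2 + |(1 / 24 : ℝ)| * M * M ^ 3 + |(1 / 72 : ℝ)| * M ^ 2 * M ^ 3 + M

noncomputable def waldRemainderConst (M : ℝ) : ℝ :=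
  let K := M + rootShiftConst M
  rootShiftConst M + (|(1 / 6 : ℝ)| * M * K ^ 2 + |(-1 / 24 : ℝ)| * M * K ^ 3 +
    |(-5 / 72 : ℝ)| * M ^ 2 * K ^ 3)

lemma rootShiftConst_nonneg {M : ℝ} (hM : 0 ≤ M) : 0 ≤ rootShiftConst M := by
  unfold rootShiftConst; positivity

lemma waldRemainderConst_pos {M : ℝ} (hM : 0 < M) : 0 < waldRemainderConst M := by
  unfold waldRemainderConst rootShiftConst; positivity

section Scaled

variable {M s t r c₃ c₄ E : ℝ}

lemma abs_sub_root_le (hM : 0 ≤ M) (hs₀ : 0 ≤ s) (hs₁ : s ≤ 1)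
    (hr : r = t * (1 + c₃ / 6 * t - c₄ / 24 * t ^ 2 - c₃ ^ 2 / 72 * t ^ 2) + E)
    (ht : |t| ≤ M * s) (hc₃ : |c₃| ≤ M * s) (hc₄ : |c₄| ≤ M * s ^ 2)
    (hE : |E| ≤ M * s ^ 3) :
    |t - r| ≤ rootShiftConst M * s ^ 3 := by
  have hsplit : t - r =
      (-1 / 6 * c₃ * t ^ 2 + 1 / 24 * c₄ * t ^ 3 + 1 / 72 * c₃ ^ 2 * t ^ 3) - E := by
    rw [hr]; ring
  have hcorr := abs_cubic_correction_le (-1 / 6) (1 / 24) (1 / 72) hM hM hs₀ hs₁ ht hc₃ hc₄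
  rw [hsplit, rootShiftConst, add_mul]
  linarith [abs_sub (-1 / 6 * c₃ * t ^ 2 + 1 / 24 * c₄ * t ^ 3 + 1 / 72 * c₃ ^ 2 * t ^ 3) E]

lemma abs_root_le (hM : 0 ≤ M) (hs₀ : 0 ≤ s) (hs₁ : s ≤ 1)
    (hr : r = t * (1 + c₃ / 6 * t - c₄ / 24 * t ^ 2 - c₃ ^ 2 / 72 * t ^ 2) + E)
    (ht : |t| ≤ M * s) (hc₃ : |c₃| ≤ M * s) (hc₄ : |c₄| ≤ M * s ^ 2)
    (hE : |E| ≤ M * s ^ 3) :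
    |r| ≤ (M + rootShiftConst M) * s := by
  have hshift := abs_sub_root_le hM hs₀ hs₁ hr ht hc₃ hc₄ hE
  have hs₃ : s ^ 3 ≤ s := by
    simpa using pow_le_pow_of_le_one hs₀ hs₁ (show 1 ≤ 3 by norm_num)
  have := mul_le_mul_of_nonneg_left hs₃ (rootShiftConst_nonneg hM)
  linarith [abs_sub_abs_le_abs_sub r t, abs_sub_comm r t]

lemma abs_wald_remainder_le (hM : 0 ≤ M) (hs₀ : 0 ≤ s) (hs₁ : s ≤ 1)
    (hr : r = t * (1 + c₃ / 6 * t - c₄ / 24 * t ^ 2 - c₃ ^ 2 / 72 * t ^ 2) + E)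
    (ht : |t| ≤ M * s) (hc₃ : |c₃| ≤ M * s) (hc₄ : |c₄| ≤ M * s ^ 2)
    (hE : |E| ≤ M * s ^ 3) :
    |t - r * (1 - c₃ / 6 * r + c₄ / 24 * r ^ 2 + 5 * c₃ ^ 2 / 72 * r ^ 2)| ≤
      waldRemainderConst M * s ^ 3 := by
  have hsplit : t - r * (1 - c₃ / 6 * r + c₄ / 24 * r ^ 2 + 5 * c₃ ^ 2 / 72 * r ^ 2) =
      (t - r) + (1 / 6 * c₃ * r ^ 2 + -1 / 24 * c₄ * r ^ 3 + -5 / 72 * c₃ ^ 2 * r ^ 3) := by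
    ring
  have hK : 0 ≤ M + rootShiftConst M := add_nonneg hM (rootShiftConst_nonneg hM)
  have hshift := abs_sub_root_le hM hs₀ hs₁ hr ht hc₃ hc₄ hE
  have hcorr := abs_cubic_correction_le (1 / 6) (-1 / 24) (-5 / 72) hM hK hs₀ hs₁
    (abs_root_le hM hs₀ hs₁ hr ht hc₃ hc₄ hE) hc₃ hc₄
  rw [hsplit, waldRemainderConst, add_mul]
  linarith [abs_add_le (t - r)
    (1 / 6 * c₃ * r ^ 2 + -1 / 24 * c₄ * r ^ 3 + -5 / 72 * c₃ ^ 2 * r ^ 3)]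

end Scaled

/-- Series inversion: if `r = t(1 + (c₃/6)t - (c₄/24)t² - (c₃²/72)t²) + E` with
`|t| ≤ M √ε`, `|c₃| ≤ M √ε`, `|c₄| ≤ M ε`, `|E| ≤ M ε^{3/2}`, then
`t = r(1 - (c₃/6)r + (c₄/24)r² + (5c₃²/72)r²) + E'` with `|E'| ≤ C(M) ε^{3/2}`. -/
theorem wald_in_terms_of_root (M : ℝ) (hM : 0 < M) :
    ∃ C : ℝ, 0 < C ∧
      ∀ ε t r c₃ c₄ E : ℝ, 0 < ε → ε ≤ 1 →
        r = t * (1 + c₃ / 6 * t - c₄ / 24 * t ^ 2 - c₃ ^ 2 / 72 * t ^ 2) + E →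
        |t| ≤ M * Real.sqrt ε → |c₃| ≤ M * Real.sqrt ε → |c₄| ≤ M * ε →
        |E| ≤ M * (ε * Real.sqrt ε) →
        ∃ E' : ℝ,
          t = r * (1 - c₃ / 6 * r + c₄ / 24 * r ^ 2 + 5 * c₃ ^ 2 / 72 * r ^ 2) + E' ∧
          |E'| ≤ C * (ε * Real.sqrt ε) := by
  refine ⟨waldRemainderConst M, waldRemainderConst_pos hM, ?_⟩
  intro ε t r c₃ c₄ E hε hε₁ hr ht hc₃ hc₄ hE
  have hε_sq : √ε ^ 2 = ε := Real.sq_sqrt hε.le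
  have hε_cube : ε * √ε = √ε ^ 3 := by rw [pow_succ, hε_sq]
  refine ⟨_, (add_sub_cancel _ t).symm, ?_⟩
  rw [hε_cube]
  exact abs_wald_remainder_le hM.le (Real.sqrt_nonneg ε) (Real.sqrt_le_one.mpr hε₁) hr ht
    hc₃ (by rwa [hε_sq]) (by rwa [← hε_cube])
end

section
/- Suppose q, ρ, t ∈ ℝ with q = t·ρ, t = r(1 + (C/√n)q + (D/n)q²) + E₁ and ρ = 1 + (G/√n)q + (H/n)q² + E₂, where |q| ≤ M, |r| ≤ M, |C|,|D|,|G|,|H| ≤ M, |E₁|,|E₂| ≤ M·n^{−3/2}, and additionally |(C/√n)q + (D/n)q²| ≤ 1/2 and |(G/√n)q + (H/n)q²| ≤ 1/2. Then there exist A, B with |A|, |B| ≤ C'(M) such that r = q + (A/√n)q² + (B/n)q³ + E with |E| ≤ C'(M)·n^{−3/2}. -/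
/-!
Write `s = √n`, `a = C q/s + D q²/s²`, `b = G q/s + H q²/s²`. Then
`q = r (1 + a)(1 + b) + E'` with `E' = E₁ ρ + r (1 + a) E₂ = O(s⁻³)`. The cubic
`L = q - (C + G) q²/s + B q³/s²` with `B = C² + CG + G² - D - H` inverts `(1 + a)(1 + b)` to third
order: `L (1 + a)(1 + b) = q (1 + Z/s³)` where `Z` is a polynomial in `q, 1/s, C, D, G, H`, hence
bounded on the relevant box by compactness. As `(1 + a)(1 + b) ≥ 1/4`, the identity
`(r - L)(1 + a)(1 + b) = -(E' + q Z/s³)` gives `r - L = O(s⁻³)`.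
-/

def cubicCoeff (C D G H : ℝ) : ℝ := C ^ 2 + C * G + G ^ 2 - D - H

/-- The coefficient of `w³` in
`(1 - (C+G) q w + B q² w²)(1 + C q w + D q² w²)(1 + G q w + H q² w²)`, `B = cubicCoeff C D G H`;
this `B` is exactly what makes the `w²` coefficient vanish. -/
def cubicDefect (q w C D G H : ℝ) : ℝ :=
  cubicCoeff C D G H * (C + G) * q ^ 3
    + (cubicCoeff C D G H * q ^ 2 * w - (C + G) * q) * (D + H + C * G) * q ^ 2
    + (1 - (C + G) * q * w + cubicCoeff C D G H * q ^ 2 * w ^ 2)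
      * ((C * H + D * G) * q ^ 3 + D * H * q ^ 4 * w)

lemma cubic_mul_one_add_mul_one_add (q s C D G H : ℝ) (hs : s ≠ 0) :
    (q - (C + G) / s * q ^ 2 + cubicCoeff C D G H / s ^ 2 * q ^ 3)
        * ((1 + (C / s * q + D / s ^ 2 * q ^ 2)) * (1 + (G / s * q + H / s ^ 2 * q ^ 2)))
      = q * (1 + cubicDefect q s⁻¹ C D G H / s ^ 3) := by
  unfold cubicDefect cubicCoeff
  field_simp
  ring

lemma exists_abs_cubicDefect_le (R : ℝ) :
    ∃ K, 0 ≤ K ∧ ∀ q w C D G H : ℝ, |q| ≤ R → |w| ≤ R → |C| ≤ R → |D| ≤ R → |G| ≤ R →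
      |H| ≤ R → |cubicDefect q w C D G H| ≤ K := by
  obtain ⟨K, hK⟩ := (isCompact_closedBall (0 : Fin 6 → ℝ) R).exists_bound_of_continuousOn
    (f := fun x ↦ cubicDefect (x 0) (x 1) (x 2) (x 3) (x 4) (x 5))
    (by unfold cubicDefect cubicCoeff; fun_prop)
  refine ⟨max K 0, le_max_right _ _, fun q w C D G H hq hw hC hD hG hH ↦ ?_⟩
  have hx : ![q, w, C, D, G, H] ∈ Metric.closedBall (0 : Fin 6 → ℝ) R := by
    rw [mem_closedBall_zero_iff, pi_norm_le_iff_of_nonneg ((abs_nonneg q).trans hq)]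
    simp [Fin.forall_fin_succ, Real.norm_eq_abs, *]
  exact (hK _ hx).trans (le_max_left _ _)

lemma quarter_le_one_add_mul_one_add {a b : ℝ} (ha : |a| ≤ 1 / 2) (hb : |b| ≤ 1 / 2) :
    1 / 4 ≤ (1 + a) * (1 + b) := by
  nlinarith [(abs_le.mp ha).1, (abs_le.mp hb).1]

lemma abs_cubicCoeff_le {M C D G H : ℝ} (hC : |C| ≤ M) (hD : |D| ≤ M) (hG : |G| ≤ M)
    (hH : |H| ≤ M) : |cubicCoeff C D G H| ≤ 3 * M ^ 2 + 2 * M := by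
  unfold cubicCoeff
  calc |C ^ 2 + C * G + G ^ 2 - D - H| ≤ |C| ^ 2 + |C| * |G| + |G| ^ 2 + |D| + |H| := by
        simp only [← abs_pow, ← abs_mul]
        linarith [abs_sub (C ^ 2 + C * G + G ^ 2 - D) H, abs_sub (C ^ 2 + C * G + G ^ 2) D,
          abs_add_three (C ^ 2) (C * G) (G ^ 2)]
    _ ≤ M ^ 2 + M * M + M ^ 2 + M + M := by gcongr; linarith [abs_nonneg C, abs_nonneg G]
    _ = 3 * M ^ 2 + 2 * M := by ring

lemma abs_root_sub_cubic_le {M K s q ρ t r C D G H E₁ E₂ : ℝ} (hs : 1 ≤ s)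
    (hq : q = t * ρ) (ht : t = r * (1 + C / s * q + D / s ^ 2 * q ^ 2) + E₁)
    (hρ : ρ = 1 + G / s * q + H / s ^ 2 * q ^ 2 + E₂) (hqM : |q| ≤ M) (hrM : |r| ≤ M)
    (hE₁ : |E₁| ≤ M / (s ^ 2 * s)) (hE₂ : |E₂| ≤ M / (s ^ 2 * s))
    (ha : |C / s * q + D / s ^ 2 * q ^ 2| ≤ 1 / 2) (hb : |G / s * q + H / s ^ 2 * q ^ 2| ≤ 1 / 2)
    (hZ : |cubicDefect q s⁻¹ C D G H| ≤ K) :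
    |r - (q - (C + G) / s * q ^ 2 + cubicCoeff C D G H / s ^ 2 * q ^ 3)|
      ≤ 4 * ((3 / 2 + M) * M + 3 / 2 * M * M + M * K) / (s ^ 2 * s) := by
  have hs0 : 0 < s := by linarith
  have hLP := cubic_mul_one_add_mul_one_add q s C D G H hs0.ne'
  rw [add_assoc 1] at ht hρ
  set a := C / s * q + D / s ^ 2 * q ^ 2
  set b := G / s * q + H / s ^ 2 * q ^ 2
  set Z := cubicDefect q s⁻¹ C D G H
  clear_value a b Z
  have hs3 : 0 < s ^ 2 * s := by positivity
  have hM : 0 ≤ M := (abs_nonneg q).trans hqM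
  have hE₂M : |E₂| ≤ M := hE₂.trans (div_le_self hM (by nlinarith))
  have hP := quarter_le_one_add_mul_one_add ha hb
  have hrP : q = r * ((1 + a) * (1 + b)) + (E₁ * ρ + r * (1 + a) * E₂) := by
    linear_combination hq + ρ * ht + r * (1 + a) * hρ
  have hkey : (r - (q - (C + G) / s * q ^ 2 + cubicCoeff C D G H / s ^ 2 * q ^ 3))
      * ((1 + a) * (1 + b)) = -(E₁ * ρ + r * (1 + a) * E₂ + q * Z / (s ^ 2 * s)) := by
    rw [show s ^ 2 * s = s ^ 3 by ring]
    linear_combination -hrP - hLP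
  have hρM : |ρ| ≤ 3 / 2 + M := by
    rw [hρ]
    linarith [abs_add_three 1 b E₂, abs_one (α := ℝ)]
  have haM : |1 + a| ≤ 3 / 2 := by linarith [abs_add_le 1 a, abs_one (α := ℝ)]
  have hrem : |E₁ * ρ + r * (1 + a) * E₂ + q * Z / (s ^ 2 * s)|
      ≤ ((3 / 2 + M) * M + 3 / 2 * M * M + M * K) / (s ^ 2 * s) :=
    calc |E₁ * ρ + r * (1 + a) * E₂ + q * Z / (s ^ 2 * s)|
        ≤ |E₁| * |ρ| + |r| * |1 + a| * |E₂| + |q| * |Z| / (s ^ 2 * s) := by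
          refine (abs_add_three _ _ _).trans_eq ?_
          rw [abs_div, abs_of_pos hs3]
          simp only [abs_mul]
      _ ≤ M / (s ^ 2 * s) * (3 / 2 + M) + M * (3 / 2) * (M / (s ^ 2 * s))
            + M * K / (s ^ 2 * s) := by gcongr
      _ = ((3 / 2 + M) * M + 3 / 2 * M * M + M * K) / (s ^ 2 * s) := by ring
  have hP0 : 0 < (1 + a) * (1 + b) := by linarith
  rw [eq_div_of_mul_eq hP0.ne' hkey, abs_div, abs_neg, abs_of_pos hP0]
  calc _ ≤ |E₁ * ρ + r * (1 + a) * E₂ + q * Z / (s ^ 2 * s)| / (1 / 4) :=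
        div_le_div_of_nonneg_left (abs_nonneg _) (by norm_num) hP
    _ ≤ ((3 / 2 + M) * M + 3 / 2 * M * M + M * K) / (s ^ 2 * s) / (1 / 4) := by gcongr
    _ = _ := by ring

/-- Abstract form of Theorem 3: if `q = t ρ` where
`t = r(1 + (C/√n) q + (D/n) q²) + E₁` and `ρ = 1 + (G/√n) q + (H/n) q² + E₂`
with all coefficients bounded by `M` and errors of size `M n^{-3/2}`, then
`r = q + (A/√n) q² + (B/n) q³ + O(n^{-3/2})` with bounded `A`, `B`. -/
theorem root_as_cubic_in_q (M : ℝ) (hM : 0 < M) :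
    ∃ C' : ℝ, 0 < C' ∧
      ∀ (n q ρ t r C D G H E₁ E₂ : ℝ), 1 ≤ n →
        q = t * ρ →
        t = r * (1 + C / Real.sqrt n * q + D / n * q ^ 2) + E₁ →
        ρ = 1 + G / Real.sqrt n * q + H / n * q ^ 2 + E₂ →
        |q| ≤ M → |r| ≤ M → |C| ≤ M → |D| ≤ M → |G| ≤ M → |H| ≤ M →
        |E₁| ≤ M / (n * Real.sqrt n) → |E₂| ≤ M / (n * Real.sqrt n) →
        |C / Real.sqrt n * q + D / n * q ^ 2| ≤ 1 / 2 →
        |G / Real.sqrt n * q + H / n * q ^ 2| ≤ 1 / 2 →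
        ∃ A B E : ℝ, |A| ≤ C' ∧ |B| ≤ C' ∧
          r = q + A / Real.sqrt n * q ^ 2 + B / n * q ^ 3 + E ∧
          |E| ≤ C' / (n * Real.sqrt n) := by
  obtain ⟨K, hK, hZ⟩ := exists_abs_cubicDefect_le (max M 1)
  set R := (3 / 2 + M) * M + 3 / 2 * M * M + M * K
  refine ⟨3 * M ^ 2 + 2 * M + 4 * R, by positivity, ?_⟩
  intro n q ρ t r C D G H E₁ E₂ hn hq ht hρ hqM hrM hCM hDM hGM hHM hE₁ hE₂ ha hb
  obtain ⟨s, hs, rfl⟩ : ∃ s, 1 ≤ s ∧ s ^ 2 = n :=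
    ⟨√n, Real.one_le_sqrt.mpr hn, Real.sq_sqrt (by linarith)⟩
  rw [Real.sqrt_sq (by linarith)] at *
  have hw : |s⁻¹| ≤ max M 1 := by
    rw [abs_inv, abs_of_pos (by linarith)]
    exact (inv_le_one_of_one_le₀ hs).trans (le_max_right _ _)
  have hE : |r - (q - (C + G) / s * q ^ 2 + cubicCoeff C D G H / s ^ 2 * q ^ 3)|
      ≤ 4 * R / (s ^ 2 * s) := abs_root_sub_cubic_le hs hq ht hρ hqM hrM hE₁ hE₂ ha hb
    (hZ q s⁻¹ C D G H (hqM.trans (le_max_left _ _)) hw (hCM.trans (le_max_left _ _))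
      (hDM.trans (le_max_left _ _)) (hGM.trans (le_max_left _ _)) (hHM.trans (le_max_left _ _)))
  have hR : 0 ≤ R := by positivity
  refine ⟨-(C + G), cubicCoeff C D G H,
    r - (q - (C + G) / s * q ^ 2 + cubicCoeff C D G H / s ^ 2 * q ^ 3), ?_, ?_, by ring,
    hE.trans (div_le_div_of_nonneg_right (by nlinarith) (by positivity))⟩
  · rw [abs_neg]
    nlinarith [abs_add_le C G]
  · nlinarith [abs_cubicCoeff_le hCM hDM hGM hHM]
end

section
/- Let r ≠ 0 and suppose r* = r + (1/r)·log(q/r) where q/r > 0, and suppose q = r·(1 + a·r + b·r²) with |a·r + b·r²| ≤ 1/2, |a| ≤ M·ε^{1/2}, |b| ≤ M·ε, |r| ≤ M, ε ∈ (0,1]. Then there exist Ã, B̃ with |Ã| ≤ C(M)·ε^{1/2} and |B̃| ≤ C(M)·ε such that |r* − (r − Ã)/(1 + B̃)| ≤ C(M)·ε^{3/2}. -/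
/-!
Write `q / r = 1 + x` with `x = r (a + b r) = O(√ε)`. The second-order Taylor expansion of the
logarithm gives `r* = r + (x - x² / 2) / r + O(|x|³ / |r|) = a + r (1 + β) + O(ε^{3/2})` with
`β = b - a² / 2 = O(ε)`, and `a + r (1 + β)` differs from `(r + a (1 - β)) / (1 - β)` by
`r β² / (1 - β) = O(ε²)`; so `Ã = -a (1 - β)` and `B̃ = -β` work. When `|β| > 1 / 2`, `ε` is
bounded below, and `Ã = B̃ = 0` already work because `r* - r = log (1 + x) / r = O(√ε)`.
-/

open Real

lemma abs_log_one_add_le {x : ℝ} (hx : |x| ≤ 1 / 2) : |log (1 + x)| ≤ 2 * |x| := by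
  have h := abs_log_sub_add_sum_range_le (x := -x) (by rw [abs_neg]; linarith) 0
  rw [Finset.sum_range_zero, zero_add, sub_neg_eq_add, abs_neg, pow_one] at h
  refine h.trans ?_
  rw [div_le_iff₀ (by linarith)]
  nlinarith [abs_nonneg x]

lemma abs_log_one_add_sub_le {x : ℝ} (hx : |x| ≤ 1 / 2) :
    |log (1 + x) - (x - x ^ 2 / 2)| ≤ 2 * |x| ^ 3 := by
  have h := abs_log_sub_add_sum_range_le (x := -x) (by rw [abs_neg]; linarith) 2
  simp only [Finset.sum_range_succ, Finset.sum_range_zero, sub_neg_eq_add, abs_neg] at h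
  calc |log (1 + x) - (x - x ^ 2 / 2)|
      = |0 + (-x) ^ (0 + 1) / ((0 : ℕ) + 1) + (-x) ^ (1 + 1) / ((1 : ℕ) + 1) + log (1 + x)| := by
        congr 1; push_cast; ring
    _ ≤ |x| ^ 3 / (1 - |x|) := h
    _ ≤ 2 * |x| ^ 3 := by
        rw [div_le_iff₀ (by linarith)]
        nlinarith [pow_nonneg (abs_nonneg x) 3]

lemma rstar_sub_location_scale_eq {a b r β L : ℝ} (hr : r ≠ 0) (hβ : β = b - a ^ 2 / 2)
    (hβ1 : 1 - β ≠ 0) :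
    r + 1 / r * L - (r - -a * (1 - β)) / (1 + -β) =
      -r * β ^ 2 / (1 - β) - a * b * r ^ 2 - b ^ 2 * r ^ 3 / 2
        + (L - (r * (a + b * r) - (r * (a + b * r)) ^ 2 / 2)) / r := by
  rw [← sub_eq_add_neg]
  field_simp
  rw [hβ]
  ring

section Bounds

variable {K ε s a b r : ℝ}

lemma abs_location_scale_remainder_le (hK : 1 ≤ K) (hε : 0 ≤ ε) (hs : s * s = ε) (hεs : ε ≤ s)
    (ha : |a| ≤ K * s) (hb : |b| ≤ K * ε) (hr : |r| ≤ K) (hr0 : r ≠ 0)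
    {β R : ℝ} (hβ : |β| ≤ 2 * K ^ 2 * ε) (hβ1 : |β| ≤ 1 / 2)
    (hab : |a + b * r| ≤ 2 * K ^ 2 * s) (hR : |R| ≤ 2 * |r * (a + b * r)| ^ 3) :
    |-r * β ^ 2 / (1 - β) - a * b * r ^ 2 - b ^ 2 * r ^ 3 / 2 + R / r| ≤
      32 * K ^ 8 * (ε * s) := by
  have hs0 : 0 ≤ s := hε.trans hεs
  have h1 : |-r * β ^ 2 / (1 - β)| ≤ 8 * K ^ 8 * (ε * s) := by
    have hβ' : 1 / 2 ≤ 1 - β := by linarith [le_abs_self β]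
    rw [abs_div, abs_of_pos (show 0 < 1 - β by linarith), div_le_iff₀ (by linarith), abs_mul,
      abs_neg, abs_pow]
    calc |r| * |β| ^ 2 ≤ K * (2 * K ^ 2 * ε) ^ 2 := by gcongr
      _ = 4 * K ^ 5 * (ε * ε) := by ring
      _ ≤ 4 * K ^ 8 * (ε * s) := by gcongr; norm_num
      _ = 8 * K ^ 8 * (ε * s) * (1 / 2) := by ring
      _ ≤ 8 * K ^ 8 * (ε * s) * (1 - β) := by gcongr
  have h2 : |a * b * r ^ 2| ≤ K ^ 8 * (ε * s) := by
    rw [abs_mul, abs_mul, abs_pow]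
    calc |a| * |b| * |r| ^ 2 ≤ K * s * (K * ε) * K ^ 2 := by gcongr
      _ = K ^ 4 * (ε * s) := by ring
      _ ≤ K ^ 8 * (ε * s) := by gcongr; norm_num
  have h3 : |b ^ 2 * r ^ 3 / 2| ≤ K ^ 8 * (ε * s) := by
    rw [abs_div, abs_mul, abs_pow, abs_pow, abs_two]
    calc |b| ^ 2 * |r| ^ 3 / 2 ≤ (K * ε) ^ 2 * K ^ 3 / 2 := by gcongr
      _ = K ^ 5 * (ε * ε) / 2 := by ring
      _ ≤ K ^ 8 * (ε * s) / 2 := by gcongr; norm_num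
      _ ≤ K ^ 8 * (ε * s) := by linarith [show 0 ≤ K ^ 8 * (ε * s) by positivity]
  have h4 : |R / r| ≤ 16 * K ^ 8 * (ε * s) := by
    rw [abs_div, div_le_iff₀ (abs_pos.mpr hr0)]
    calc |R| ≤ 2 * |r * (a + b * r)| ^ 3 := hR
      _ = 2 * |r| ^ 2 * |a + b * r| ^ 3 * |r| := by rw [abs_mul]; ring
      _ ≤ 2 * K ^ 2 * (2 * K ^ 2 * s) ^ 3 * |r| := by gcongr
      _ = 16 * K ^ 8 * (ε * s) * |r| := by rw [← hs]; ring
  rw [abs_le] at h1 h2 h3 h4 ⊢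
  constructor <;> linarith

lemma abs_add_mul_le (hK : 1 ≤ K) (hε : 0 ≤ ε) (hεs : ε ≤ s) (ha : |a| ≤ K * s)
    (hb : |b| ≤ K * ε) (hr : |r| ≤ K) : |a + b * r| ≤ 2 * K ^ 2 * s := by
  have hs : 0 ≤ s := hε.trans hεs
  have hbr : |b * r| ≤ K * s * K := by
    rw [abs_mul]
    exact mul_le_mul (hb.trans (by gcongr)) hr (abs_nonneg r) (by positivity)
  have hKs : K * s ≤ K ^ 2 * s := by
    gcongr; nlinarith
  calc |a + b * r| ≤ |a| + |b * r| := abs_add_le _ _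
    _ ≤ K ^ 2 * s + K * s * K := by linarith
    _ = 2 * K ^ 2 * s := by ring

lemma abs_sub_sq_div_two_le (hK : 1 ≤ K) (hε : 0 ≤ ε) (hs : s * s = ε) (ha : |a| ≤ K * s)
    (hb : |b| ≤ K * ε) : |b - a ^ 2 / 2| ≤ 2 * K ^ 2 * ε := by
  have ha2 : a ^ 2 ≤ K ^ 2 * ε := by
    rw [← sq_abs, ← hs]
    calc |a| ^ 2 ≤ (K * s) ^ 2 := by gcongr
      _ = K ^ 2 * (s * s) := by ring
  have hKε : K * ε ≤ K ^ 2 * ε := by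
    gcongr; nlinarith
  calc |b - a ^ 2 / 2| ≤ |b| + |a ^ 2 / 2| := abs_sub _ _
    _ ≤ K ^ 2 * ε + K ^ 2 * ε / 2 := by
      rw [abs_of_nonneg (by positivity : (0 : ℝ) ≤ a ^ 2 / 2)]; linarith
    _ ≤ 2 * K ^ 2 * ε := by nlinarith [sq_nonneg K]

lemma abs_log_one_add_mul_div_le {y : ℝ} (hr : r ≠ 0) (hx : |r * y| ≤ 1 / 2) :
    |1 / r * log (1 + r * y)| ≤ 2 * |y| := by
  rw [one_div_mul_eq_div, abs_div, div_le_iff₀ (abs_pos.mpr hr)]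
  calc |log (1 + r * y)| ≤ 2 * |r * y| := abs_log_one_add_le hx
    _ = 2 * |y| * |r| := by rw [abs_mul]; ring

theorem exists_location_scale_approx (hK : 1 ≤ K) (hε : 0 ≤ ε) (hs : s * s = ε) (hεs : ε ≤ s)
    (ha : |a| ≤ K * s) (hb : |b| ≤ K * ε) (hr : |r| ≤ K) (hr0 : r ≠ 0)
    (hx : |r * (a + b * r)| ≤ 1 / 2) :
    ∃ A B : ℝ, |A| ≤ 32 * K ^ 8 * s ∧ |B| ≤ 32 * K ^ 8 * ε ∧
      |r + 1 / r * log (1 + r * (a + b * r)) - (r - A) / (1 + B)| ≤ 32 * K ^ 8 * (ε * s) := by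
  have hs0 : 0 ≤ s := hε.trans hεs
  have hab := abs_add_mul_le hK hε hεs ha hb hr
  have hβ := abs_sub_sq_div_two_le hK hε hs ha hb
  set β := b - a ^ 2 / 2 with hβ_def
  by_cases hβ1 : |β| ≤ 1 / 2
  · refine ⟨-a * (1 - β), -β, ?_, ?_, ?_⟩
    · have h1β : |1 - β| ≤ 2 := by rw [abs_le] at hβ1 ⊢; constructor <;> linarith
      rw [abs_mul, abs_neg]
      calc |a| * |1 - β| ≤ K * s * 2 := by gcongr
        _ ≤ 32 * K ^ 8 * s := by nlinarith [pow_le_pow_right₀ hK (show 1 ≤ 8 by norm_num)]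
    · rw [abs_neg]
      exact hβ.trans (by gcongr <;> norm_num)
    · rw [rstar_sub_location_scale_eq hr0 hβ_def (by linarith [le_abs_self β])]
      exact abs_location_scale_remainder_le hK hε hs hεs ha hb hr hr0 hβ hβ1 hab
        (abs_log_one_add_sub_le hx)
  · refine ⟨0, 0, by simp; positivity, by simp; positivity, ?_⟩
    have hε' : 1 < 4 * K ^ 2 * ε := by linarith
    rw [sub_zero, add_zero, div_one, add_sub_cancel_left]
    calc _ ≤ 2 * |a + b * r| := abs_log_one_add_mul_div_le hr0 hx
      _ ≤ 4 * K ^ 2 * s * 1 := by linarith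
      _ ≤ 4 * K ^ 2 * s * (4 * K ^ 2 * ε) := by gcongr
      _ = 16 * K ^ 4 * (ε * s) := by ring
      _ ≤ 32 * K ^ 8 * (ε * s) := by gcongr <;> norm_num

end Bounds

/-- Remark 1: up to `O(ε^{3/2})`, the modified likelihood root
`r* = r + r⁻¹ log (q/r)` is a location-and-scale adjustment of `r`:
`r* = (r - Aadj)/(1 + Badj) + O(ε^{3/2})` with `Aadj = O(ε^{1/2})`, `Badj = O(ε)`. -/
theorem rstar_location_scale (M : ℝ) (hM : 0 < M) :
    ∃ C : ℝ, 0 < C ∧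
      ∀ ε r q a b : ℝ, 0 < ε → ε ≤ 1 → r ≠ 0 → 0 < q / r →
        q = r * (1 + a * r + b * r ^ 2) →
        |a * r + b * r ^ 2| ≤ 1 / 2 →
        |a| ≤ M * Real.sqrt ε → |b| ≤ M * ε → |r| ≤ M →
        ∃ Aadj Badj : ℝ, |Aadj| ≤ C * Real.sqrt ε ∧ |Badj| ≤ C * ε ∧
          |(r + (1 / r) * Real.log (q / r)) - (r - Aadj) / (1 + Badj)| ≤
            C * (ε * Real.sqrt ε) := by
  refine ⟨32 * (M + 1) ^ 8, by positivity, fun ε r q a b hε hε1 hr _ hq hx ha hb hrM => ?_⟩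
  have hs : √ε * √ε = ε := mul_self_sqrt hε.le
  have hεs : ε ≤ √ε := (le_sqrt hε.le hε.le).mpr (by nlinarith)
  have hqr : q / r = 1 + r * (a + b * r) := by rw [hq]; field_simp; ring
  rw [hqr]
  exact exists_location_scale_approx (by linarith) hε.le hs hεs
    (ha.trans (by gcongr; linarith)) (hb.trans (by gcongr; linarith)) (hrM.trans (by linarith))
    hr (by convert hx using 2; ring)
end
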